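/- Let ν > 0, β > 0, t > 0, j ≥ k ≥ 0 integers, and λ_−(ξ) the smaller real root of z² + ν|ξ|²z + β²|ξ|² = 0 for |ξ| ≥ 2β/ν. Then there exist constants C, c₁, c₂ > 0 such that |λ_−(ξ)|^j e^{λ_−(ξ)t} (1+|ξ|²)^{−k} ≤ C t^{−(j−k)} e^{−c₁ t − c₂|ξ|² t} for all |ξ| ≥ 2β/ν. -/

import Mathlib

/-!
Write `x = |ξ|²` and `j = k + m`. The root satisfies `-ν x ≤ λ_- ≤ -ν x / 2`, so the symbol is at
most `ν^j x^m e^{-ν x t / 2}`. Split the exponent into three parts: `e^{-ν x t / 8}` absorbs `x^m` at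
the cost of `m! (8 / (ν t))^m`, the high-frequency condition `x ≥ 4β²/ν²` turns `e^{-ν x t / 4}`
into `e^{-β² t / ν}`, and the last `e^{-ν x t / 8}` is kept.
-/

open Real
open scoped Nat

/-- The paper's `λ_-(ξ)` as a function of `r = |ξ|`: the smaller root of `z² + ν r² z + β² r²`. -/
noncomputable def lowerRoot (ν β r : ℝ) : ℝ :=
  (-(ν * r ^ 2) - √(ν ^ 2 * r ^ 4 - 4 * β ^ 2 * r ^ 2)) / 2

lemma lowerRoot_le (ν β r : ℝ) : lowerRoot ν β r ≤ -(ν * r ^ 2 / 2) := by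
  have := sqrt_nonneg (ν ^ 2 * r ^ 4 - 4 * β ^ 2 * r ^ 2)
  unfold lowerRoot
  linarith

lemma abs_lowerRoot_le {ν : ℝ} (hν : 0 ≤ ν) (β r : ℝ) : |lowerRoot ν β r| ≤ ν * r ^ 2 := by
  have hsqrt : √(ν ^ 2 * r ^ 4 - 4 * β ^ 2 * r ^ 2) ≤ ν * r ^ 2 :=
    sqrt_le_iff.2 ⟨by positivity, by nlinarith [sq_nonneg β, sq_nonneg r]⟩
  have hνr : 0 ≤ ν * r ^ 2 := by positivity
  refine abs_le.2 ⟨?_, (lowerRoot_le ν β r).trans (by linarith)⟩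
  unfold lowerRoot
  linarith

lemma pow_add_div_one_add_pow_le {x : ℝ} (hx : 0 ≤ x) (k m : ℕ) :
    x ^ (k + m) / (1 + x) ^ k ≤ x ^ m := by
  rw [div_le_iff₀ (by positivity), pow_add, mul_comm]
  gcongr
  linarith

lemma pow_mul_exp_neg_le_factorial {a : ℝ} (ha : 0 ≤ a) (m : ℕ) : a ^ m * exp (-a) ≤ m ! := by
  have h := Real.pow_div_factorial_le_exp a ha m
  rw [div_le_iff₀ (by positivity)] at h
  calc a ^ m * exp (-a) ≤ exp a * m ! * exp (-a) := by gcongr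
    _ = m ! := by rw [mul_right_comm, ← exp_add, add_neg_cancel, exp_zero, one_mul]

lemma pow_mul_exp_neg_mul_le {s x : ℝ} (hs : 0 < s) (hx : 0 ≤ x) (m : ℕ) :
    x ^ m * exp (-(s * x)) ≤ m ! / s ^ m := by
  rw [le_div_iff₀ (by positivity), mul_right_comm, ← mul_pow, mul_comm x]
  exact pow_mul_exp_neg_le_factorial (by positivity) m

lemma abs_lowerRoot_pow_mul_exp_le {ν : ℝ} (hν : 0 ≤ ν) (β r : ℝ) {t : ℝ} (ht : 0 ≤ t) (k m : ℕ) :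
    |lowerRoot ν β r| ^ (k + m) * exp (lowerRoot ν β r * t) * ((1 + r ^ 2) ^ k)⁻¹ ≤
      ν ^ (k + m) * (r ^ 2) ^ m * exp (-(ν * r ^ 2 / 2) * t) := by
  have hpow : |lowerRoot ν β r| ^ (k + m) ≤ ν ^ (k + m) * (r ^ 2) ^ (k + m) := by
    rw [← mul_pow]
    exact pow_le_pow_left₀ (abs_nonneg _) (abs_lowerRoot_le hν β r) _
  have hexp : exp (lowerRoot ν β r * t) ≤ exp (-(ν * r ^ 2 / 2) * t) :=
    exp_le_exp.2 (mul_le_mul_of_nonneg_right (lowerRoot_le ν β r) ht)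
  calc |lowerRoot ν β r| ^ (k + m) * exp (lowerRoot ν β r * t) * ((1 + r ^ 2) ^ k)⁻¹
      ≤ ν ^ (k + m) * (r ^ 2) ^ (k + m) * exp (-(ν * r ^ 2 / 2) * t) * ((1 + r ^ 2) ^ k)⁻¹ := by
        gcongr
    _ = ν ^ (k + m) * ((r ^ 2) ^ (k + m) / (1 + r ^ 2) ^ k) * exp (-(ν * r ^ 2 / 2) * t) := by
        ring
    _ ≤ ν ^ (k + m) * (r ^ 2) ^ m * exp (-(ν * r ^ 2 / 2) * t) := by
        gcongr
        exact pow_add_div_one_add_pow_le (by positivity) k m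

lemma pow_mul_exp_neg_half_le {ν β t x : ℝ} (hν : 0 < ν) (ht : 0 < t) (hx : (2 * β / ν) ^ 2 ≤ x)
    (m : ℕ) :
    x ^ m * exp (-(ν * x / 2) * t) ≤
      (8 / ν) ^ m * m ! * (t ^ m)⁻¹ * exp (-(β ^ 2 / ν) * t - ν / 8 * x * t) := by
  have hx₀ : 0 ≤ x := (sq_nonneg _).trans hx
  have hβx : β ^ 2 / ν ≤ ν * x / 4 := by
    rw [div_pow, div_le_iff₀ (by positivity)] at hx
    rw [div_le_iff₀ hν]
    nlinarith
  calc x ^ m * exp (-(ν * x / 2) * t)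
      = x ^ m * exp (-(ν * t / 8 * x)) * (exp (-(ν * x / 4) * t) * exp (-(ν / 8 * x * t))) := by
        rw [mul_assoc, ← exp_add, ← exp_add]
        ring_nf
    _ ≤ m ! / (ν * t / 8) ^ m * (exp (-(β ^ 2 / ν) * t) * exp (-(ν / 8 * x * t))) := by
        gcongr
        exact pow_mul_exp_neg_mul_le (by positivity) hx₀ m
    _ = (8 / ν) ^ m * m ! * (t ^ m)⁻¹ * exp (-(β ^ 2 / ν) * t - ν / 8 * x * t) := by
        rw [sub_eq_add_neg, exp_add, div_pow, div_pow, mul_pow]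
        field_simp

theorem high_frequency_symbol_bound (ν β t : ℝ) (j k : ℕ)
    (hν : 0 < ν) (hβ : 0 < β) (ht : 0 < t) (hjk : k ≤ j) :
    ∃ C > 0, ∃ c₁ > 0, ∃ c₂ > 0,
      ∀ ξ : EuclideanSpace ℝ (Fin 3), 2 * β / ν ≤ ‖ξ‖ →
        |(-(ν * ‖ξ‖^2) - Real.sqrt (ν^2 * ‖ξ‖^4 - 4 * β^2 * ‖ξ‖^2)) / 2| ^ j *
            Real.exp ((-(ν * ‖ξ‖^2) - Real.sqrt (ν^2 * ‖ξ‖^4 - 4 * β^2 * ‖ξ‖^2)) / 2 * t) *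
            ((1 + ‖ξ‖^2) ^ k)⁻¹ ≤
          C * t ^ ((k:ℝ) - (j:ℝ)) * Real.exp (-c₁ * t - c₂ * ‖ξ‖^2 * t) := by
  obtain ⟨m, rfl⟩ := Nat.exists_eq_add_of_le hjk
  have htpow : t ^ ((k : ℝ) - ((k + m : ℕ) : ℝ)) = (t ^ m)⁻¹ := by
    rw [Nat.cast_add, sub_add_cancel_left, rpow_neg ht.le, rpow_natCast]
  refine ⟨ν ^ (k + m) * ((8 / ν) ^ m * m !), by positivity, β ^ 2 / ν, by positivity, ν / 8,
    by positivity, fun ξ hξ => ?_⟩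
  have hx : (2 * β / ν) ^ 2 ≤ ‖ξ‖ ^ 2 := pow_le_pow_left₀ (by positivity) hξ 2
  calc |lowerRoot ν β ‖ξ‖| ^ (k + m) * exp (lowerRoot ν β ‖ξ‖ * t) * ((1 + ‖ξ‖ ^ 2) ^ k)⁻¹
      ≤ ν ^ (k + m) * ((‖ξ‖ ^ 2) ^ m * exp (-(ν * ‖ξ‖ ^ 2 / 2) * t)) := by
        rw [← mul_assoc]
        exact abs_lowerRoot_pow_mul_exp_le hν.le β ‖ξ‖ ht.le k m
    _ ≤ ν ^ (k + m) * ((8 / ν) ^ m * m ! * (t ^ m)⁻¹ *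
          exp (-(β ^ 2 / ν) * t - ν / 8 * ‖ξ‖ ^ 2 * t)) :=
        mul_le_mul_of_nonneg_left (pow_mul_exp_neg_half_le hν ht hx m) (by positivity)
    _ = _ := by
        rw [htpow]
        ring
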